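/- Let μ ∈ C_c^∞(ℂ) and define ω₁(z,k) = (i k/π) ∫_ℂ e_k(z₁) μ(z₁)/(z - z₁) d²z₁ for z outside the support of μ, where e_k(z₁) = exp(2i Re(k z₁)). Writing k = τ e^{iφ} with τ ∈ ℝ, the partial Fourier transform in τ satisfies ∫_ℝ e^{-i t τ} ω₁(z, τ e^{iφ}) dτ = -2 e^{iφ} ∫_ℂ δ'(t - 2 Re(e^{iφ} z₁)) μ(z₁)/(z - z₁) d²z₁, interpreted distributionally: i.e., for every test function ψ ∈ C_c^∞(ℝ), ∫_ℝ ψ(t) ω̂₁(z,t,e^{iφ}) dt = 2 e^{iφ} ∫_ℂ ψ'(2 Re(e^{iφ} z₁)) μ(z₁)/(z - z₁) d²z₁. -/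

import Mathlib

open MeasureTheory
open Complex FourierTransform Real

lemma fourier_cont {f : ℝ → ℂ} (hint : Integrable f) : Continuous (𝓕 f) :=
  VectorFourier.fourierIntegral_continuous Real.continuous_fourierChar
    (by exact continuous_inner) hint

lemma fourier_cpt_integrable {f : ℝ → ℂ} (hf : ContDiff ℝ (⊤ : ℕ∞) f)
    (hs : HasCompactSupport f) : Integrable (𝓕 f) := by
  have hd1 : ContDiff ℝ (⊤ : ℕ∞) (deriv f) := (contDiff_infty_iff_deriv.mp hf).2
  have hd2 : ContDiff ℝ (⊤ : ℕ∞) (deriv (deriv f)) := (contDiff_infty_iff_deriv.mp hd1).2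
  have hs1 : HasCompactSupport (deriv f) := hs.deriv
  have hs2 : HasCompactSupport (deriv (deriv f)) := hs1.deriv
  have hint : Integrable f := hf.continuous.integrable_of_hasCompactSupport hs
  have hint1 : Integrable (deriv f) := hd1.continuous.integrable_of_hasCompactSupport hs1
  have hint2 : Integrable (deriv (deriv f)) := hd2.continuous.integrable_of_hasCompactSupport hs2
  have hFd1 : 𝓕 (deriv f) = fun x : ℝ => (2 * π * I * x) • (𝓕 f x) :=
    Real.fourier_deriv hint (hf.differentiable (by simp)) hint1
  have hFd2 : 𝓕 (deriv (deriv f)) = fun x : ℝ => (2 * π * I * x) • (𝓕 (deriv f) x) :=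
    Real.fourier_deriv hint1 (hd1.differentiable (by simp)) hint2
  set C0 : ℝ := ∫ t, ‖f t‖ with hC0
  set C2 : ℝ := ∫ t, ‖deriv (deriv f) t‖ with hC2
  have hb0 : ∀ x, ‖𝓕 f x‖ ≤ C0 := fun x =>
    VectorFourier.norm_fourierIntegral_le_integral_norm _ _ _ _ _
  have hb2 : ∀ x, ‖𝓕 (deriv (deriv f)) x‖ ≤ C2 := fun x =>
    VectorFourier.norm_fourierIntegral_le_integral_norm _ _ _ _ _
  have hbound : ∀ x : ℝ, ‖𝓕 f x‖ ≤ (C0 + C2) * (1 + x ^ 2)⁻¹ := by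
    intro x
    have h1x : (0:ℝ) < 1 + x ^ 2 := by positivity
    rw [← div_eq_mul_inv, le_div_iff₀ h1x]
    have h2 := hb2 x
    simp only [hFd2, hFd1, norm_smul] at h2
    have hn : ‖(2 * (π:ℂ) * I * (x:ℂ))‖ = 2 * π * |x| := by
      simp [norm_mul, Complex.norm_real, _root_.abs_of_nonneg Real.pi_nonneg]
    rw [hn] at h2
    have h0 := hb0 x
    have hx2 : |x| ^ 2 = x ^ 2 := sq_abs x
    have h4 : (1:ℝ) ≤ 4 * π ^ 2 := by nlinarith [Real.pi_gt_three]
    have hprod : (0:ℝ) ≤ x ^ 2 * ‖𝓕 f x‖ := by positivity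
    have hstep : x ^ 2 * ‖𝓕 f x‖ * 1 ≤ x ^ 2 * ‖𝓕 f x‖ * (4 * π ^ 2) :=
      mul_le_mul_of_nonneg_left h4 hprod
    have habs : 2 * π * |x| * (2 * π * |x| * ‖𝓕 f x‖)
        = x ^ 2 * ‖𝓕 f x‖ * (4 * π ^ 2) := by rw [← _root_.sq_abs x]; ring
    rw [habs] at h2
    have hxn : x ^ 2 * ‖𝓕 f x‖ ≤ C2 := le_trans (by linarith) h2
    nlinarith
  have hcont : Continuous (𝓕 f) := fourier_cont hint
  have hmaj : Integrable (fun x : ℝ => (C0 + C2) * (1 + x ^ 2)⁻¹) :=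
    integrable_inv_one_add_sq.const_mul _
  exact hmaj.mono' hcont.aestronglyMeasurable (Filter.Eventually.of_forall hbound)


lemma hat_eq (ψ : ℝ → ℂ) (τ : ℝ) :
    (∫ t : ℝ, ψ t * Complex.exp (-Complex.I * t * τ)) = 𝓕 ψ (τ / (2 * π)) := by
  rw [Real.fourier_real_eq_integral_exp_smul]
  refine integral_congr_ae (Filter.Eventually.of_forall fun t => ?_)
  have harg : ((-2 * π * t * (τ / (2 * π)) : ℝ) : ℂ) * Complex.I
      = -Complex.I * t * τ := by
    have h : (-2 * π * t * (τ / (2 * π)) : ℝ) = -(t * τ) := by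
      field_simp
    rw [h]; push_cast; ring
  show ψ t * Complex.exp (-Complex.I * t * τ)
      = Complex.exp (((-2 * π * t * (τ / (2 * π)) : ℝ) : ℂ) * Complex.I) • ψ t
  rw [smul_eq_mul, harg, mul_comm]

lemma key {ψ : ℝ → ℂ} (hψ : ContDiff ℝ (⊤ : ℕ∞) ψ) (hψs : HasCompactSupport ψ) (s : ℝ) :
    (∫ τ : ℝ, Complex.I * τ * Complex.exp (Complex.I * s * τ)
        * (∫ t : ℝ, ψ t * Complex.exp (-Complex.I * t * τ)))
      = 2 * (π : ℂ) * deriv ψ s := by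
  have hπ : (2 * π : ℝ) ≠ 0 := mul_ne_zero two_ne_zero Real.pi_ne_zero
  have hψint : Integrable ψ := hψ.continuous.integrable_of_hasCompactSupport hψs
  have hd1 : ContDiff ℝ (⊤ : ℕ∞) (deriv ψ) := (contDiff_infty_iff_deriv.mp hψ).2
  have hs1 : HasCompactSupport (deriv ψ) := hψs.deriv
  have hdint : Integrable (deriv ψ) := hd1.continuous.integrable_of_hasCompactSupport hs1
  have hFd : Integrable (𝓕 (deriv ψ)) := fourier_cpt_integrable hd1 hs1
  have hFderiv : 𝓕 (deriv ψ) = fun u : ℝ => (2 * π * Complex.I * u) • (𝓕 ψ u) :=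
    Real.fourier_deriv hψint (hψ.differentiable (by simp)) hdint
  set g : ℝ → ℂ := fun τ => Complex.I * τ * Complex.exp (Complex.I * s * τ)
      * (∫ t : ℝ, ψ t * Complex.exp (-Complex.I * t * τ)) with hg
  have hgval : ∀ u : ℝ, g (2 * π * u)
      = Complex.exp (((2 * π * (u * s) : ℝ) : ℂ) * Complex.I) • 𝓕 (deriv ψ) u := by
    intro u
    have hdiv : (2 * π * u) / (2 * π) = u := by field_simp
    rw [hg]
    simp only [hat_eq ψ (2 * π * u), hdiv, hFderiv]
    have hargeq : (Complex.I * (s : ℂ) * ((2 * π * u : ℝ) : ℂ))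
        = ((2 * π * (u * s) : ℝ) : ℂ) * Complex.I := by push_cast; ring
    rw [smul_eq_mul, smul_eq_mul, hargeq]
    push_cast; ring
  have hsub : (∫ u : ℝ, g (2 * π * u)) = |(2 * π : ℝ)⁻¹| • ∫ τ, g τ :=
    MeasureTheory.Measure.integral_comp_mul_left g (2 * π)
  have htot : (∫ τ : ℝ, g τ) = (2 * π : ℝ) • ∫ u : ℝ, g (2 * π * u) := by
    rw [hsub, smul_smul, abs_of_pos (by positivity), mul_inv_cancel₀ hπ, one_smul]
  have hinv : (∫ u : ℝ, Complex.exp (((2 * π * (u * s) : ℝ) : ℂ) * Complex.I)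
      • 𝓕 (deriv ψ) u) = 𝓕⁻ (𝓕 (deriv ψ)) s := by
    rw [Real.fourierInv_eq']
    simp only [RCLike.inner_apply, conj_trivial]
    simp_rw [mul_comm s]
  have hinv2 : 𝓕⁻ (𝓕 (deriv ψ)) s = deriv ψ s :=
    hdint.fourierInv_fourier_eq hFd hd1.continuous.continuousAt
  calc (∫ τ : ℝ, g τ) = (2 * π : ℝ) • ∫ u : ℝ, g (2 * π * u) := htot
    _ = (2 * π : ℝ) • ∫ u : ℝ, Complex.exp (((2 * π * (u * s) : ℝ) : ℂ) * Complex.I)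
          • 𝓕 (deriv ψ) u := by rw [integral_congr_ae (Filter.Eventually.of_forall hgval)]
    _ = (2 * π : ℝ) • deriv ψ s := by rw [hinv, hinv2]
    _ = 2 * (π : ℂ) * deriv ψ s := by
        rw [real_smul]; push_cast; ring


/-- Distributional identity for the partial Fourier transform of the first scattering term:
for `ω₁(z,k) = (ik/π) ∫ e_k(z₁) μ(z₁)/(z-z₁) d²z₁` with `k = τ e^{iφ}`, and a test
function `ψ`, pairing `ω₁(z, τe^{iφ})` against `ψ̂(τ) = ∫ ψ(t) e^{-itτ} dt` equals
`2 e^{iφ} ∫ ψ'(2 Re(e^{iφ} z₁)) μ(z₁)/(z - z₁) d²z₁`. -/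
theorem stmt8 (μ : ℂ → ℂ) (hμ : ContDiff ℝ (⊤ : ℕ∞) μ) (hsupp : HasCompactSupport μ)
    (z : ℂ) (hz : z ∉ tsupport μ)
    (φ : ℝ) (ψ : ℝ → ℂ) (hψ : ContDiff ℝ (⊤ : ℕ∞) ψ) (hψs : HasCompactSupport ψ) :
    (∫ τ : ℝ,
        ((Complex.I * (τ * Complex.exp (Complex.I * φ)) / (Real.pi : ℂ)) *
            ∫ z₁ : ℂ,
              Complex.exp (2 * Complex.I * ((((τ * Complex.exp (Complex.I * φ)) * z₁).re : ℝ) : ℂ))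
                * μ z₁ / (z - z₁)) *
          (∫ t : ℝ, ψ t * Complex.exp (-Complex.I * t * τ)))
      = 2 * Complex.exp (Complex.I * φ) *
          ∫ z₁ : ℂ, deriv ψ (2 * (Complex.exp (Complex.I * φ) * z₁).re) * μ z₁ / (z - z₁) := by
  have hπc : ((π : ℝ) : ℂ) ≠ 0 := by exact_mod_cast Real.pi_ne_zero
  have hψ' : ContDiff ℝ (⊤ : ℕ∞) ψ := hψ.of_le (by simp)
  set e : ℂ := Complex.exp (Complex.I * φ) with he
  set F : ℂ → ℂ := fun z₁ => μ z₁ / (z - z₁) with hFdef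
  set s : ℂ → ℝ := fun z₁ => 2 * (e * z₁).re with hsdef
  set w : ℝ → ℂ := fun τ => ∫ t : ℝ, ψ t * Complex.exp (-Complex.I * t * τ) with hwdef
  have hFcont : Continuous F := by
    rw [continuous_iff_continuousAt]; intro z₁
    by_cases h : z₁ ∈ tsupport μ
    · have hne : z - z₁ ≠ 0 := sub_ne_zero.mpr (fun hzz => hz (hzz ▸ h))
      exact (hμ.continuous.continuousAt).div
        ((continuous_const.sub continuous_id).continuousAt) hne
    · have hop : IsOpen (tsupport μ)ᶜ := (isClosed_tsupport μ).isOpen_compl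
      have hev : (fun _ => (0 : ℂ)) =ᶠ[nhds z₁] F := by
        filter_upwards [hop.mem_nhds h] with z₂ h2
        simp [hFdef, image_eq_zero_of_notMem_tsupport h2]
      exact continuousAt_const.congr hev
  have hFsupp : HasCompactSupport F := by
    apply hsupp.mono'
    intro z₁ h1
    by_contra h2
    exact h1 (by simp [hFdef, image_eq_zero_of_notMem_tsupport h2])
  have hFint : Integrable F := hFcont.integrable_of_hasCompactSupport hFsupp
  have hψint : Integrable ψ := hψ.continuous.integrable_of_hasCompactSupport hψs
  have hwcont : Continuous w := by
    have hwf : w = fun τ => 𝓕 ψ (τ / (2 * π)) := funext (hat_eq ψ)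
    rw [hwf]; exact (fourier_cont hψint).comp (continuous_id.div_const _)
  have hA : Integrable (fun τ : ℝ => (τ : ℂ) * w τ) := by
    have hd1 : ContDiff ℝ (⊤ : ℕ∞) (deriv ψ) := (contDiff_infty_iff_deriv.mp hψ').2
    have hs1 : HasCompactSupport (deriv ψ) := hψs.deriv
    have hdint : Integrable (deriv ψ) := hd1.continuous.integrable_of_hasCompactSupport hs1
    have hFd : Integrable (𝓕 (deriv ψ)) := fourier_cpt_integrable hd1 hs1
    have hFderiv : 𝓕 (deriv ψ) = fun u : ℝ => (2 * π * Complex.I * u) • (𝓕 ψ u) :=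
      Real.fourier_deriv hψint (hψ'.differentiable (by simp)) hdint
    have hne : (2 * (π : ℂ) * Complex.I) ≠ 0 :=
      mul_ne_zero (mul_ne_zero two_ne_zero hπc) Complex.I_ne_zero
    have hB : Integrable (fun u : ℝ => (u : ℂ) * 𝓕 ψ u) := by
      refine (hFd.const_mul (2 * (π : ℂ) * Complex.I)⁻¹).congr
        (Filter.Eventually.of_forall fun u => ?_)
      simp only [hFderiv, smul_eq_mul]
      field_simp
    have hC : Integrable (fun τ : ℝ => ((τ / (2 * π) : ℝ) : ℂ) * 𝓕 ψ (τ / (2 * π))) :=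
      hB.comp_div (mul_ne_zero two_ne_zero Real.pi_ne_zero)
    refine (hC.const_mul ((2 * π : ℝ) : ℂ)).congr (Filter.Eventually.of_forall fun τ => ?_)
    have hwτ : w τ = 𝓕 ψ (τ / (2 * π)) := hat_eq ψ τ
    show ((2 * π : ℝ) : ℂ) * (((τ / (2 * π) : ℝ) : ℂ) * 𝓕 ψ (τ / (2 * π))) = (τ : ℂ) * w τ
    rw [hwτ, ← mul_assoc]
    congr 1
    push_cast
    field_simp
  have hscont : Continuous s := by
    rw [hsdef]
    exact continuous_const.mul (Complex.continuous_re.comp (continuous_const.mul continuous_id))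
  set H : ℝ × ℂ → ℂ := fun p =>
    Complex.I * p.1 * Complex.exp (Complex.I * ((s p.2 : ℝ) : ℂ) * p.1) * w p.1 * F p.2
    with hHdef
  have hHcont : Continuous H := by
    rw [hHdef]
    refine ((((continuous_const.mul
      (Complex.continuous_ofReal.comp continuous_fst)).mul
      (Complex.continuous_exp.comp ?_)).mul (hwcont.comp continuous_fst)).mul
      (hFcont.comp continuous_snd))
    exact (continuous_const.mul ((Complex.continuous_ofReal.comp (hscont.comp
      continuous_snd)))).mul (Complex.continuous_ofReal.comp continuous_fst)
  have hHnorm : ∀ p : ℝ × ℂ, ‖H p‖ = ‖((p.1 : ℂ) * w p.1) * F p.2‖ := by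
    intro p
    have hexp : ‖Complex.exp (Complex.I * ((s p.2 : ℝ) : ℂ) * p.1)‖ = 1 := by
      have harg : Complex.I * ((s p.2 : ℝ) : ℂ) * (p.1 : ℂ)
          = ((s p.2 * p.1 : ℝ) : ℂ) * Complex.I := by push_cast; ring
      rw [harg]
      exact Complex.norm_exp_ofReal_mul_I _
    simp [hHdef, norm_mul, hexp, Complex.norm_I]
  have hHint : Integrable H := by
    have hGint : Integrable (fun p : ℝ × ℂ => ((p.1 : ℂ) * w p.1) * F p.2) := hA.mul_prod hFint
    exact hGint.norm.mono' hHcont.aestronglyMeasurable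
      (Filter.Eventually.of_forall fun p => le_of_eq (hHnorm p))
  have stepA : ∀ τ : ℝ,
      ((Complex.I * (↑τ * e) / (π : ℂ)) *
          ∫ z₁ : ℂ, Complex.exp (2 * Complex.I * ((((↑τ * e) * z₁).re : ℝ) : ℂ)) * μ z₁ / (z - z₁))
        * w τ
      = (e / (π : ℂ)) * ∫ z₁ : ℂ, H (τ, z₁) := by
    intro τ
    have hBeq : (∫ z₁ : ℂ, Complex.exp (2 * Complex.I * ((((↑τ * e) * z₁).re : ℝ) : ℂ))
          * μ z₁ / (z - z₁))
        = ∫ z₁ : ℂ, Complex.exp (Complex.I * ((s z₁ : ℝ) : ℂ) * (τ : ℂ)) * F z₁ := by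
      refine integral_congr_ae (Filter.Eventually.of_forall fun z₁ => ?_)
      show Complex.exp (2 * Complex.I * ((((↑τ * e) * z₁).re : ℝ) : ℂ)) * μ z₁ / (z - z₁)
          = Complex.exp (Complex.I * ((s z₁ : ℝ) : ℂ) * (τ : ℂ)) * F z₁
      rw [mul_div_assoc]
      congr 2
      have hre : (((τ : ℂ) * e * z₁).re : ℝ) = τ * (e * z₁).re := by
        rw [mul_assoc]; exact Complex.re_ofReal_mul τ (e * z₁)
      rw [hre]
      simp only [hsdef]
      push_cast; ring
    rw [hBeq]
    have hstep : (∫ z₁ : ℂ, H (τ, z₁))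
        = (Complex.I * (τ : ℂ) * w τ) *
            ∫ z₁ : ℂ, Complex.exp (Complex.I * ((s z₁ : ℝ) : ℂ) * (τ : ℂ)) * F z₁ := by
      rw [← integral_const_mul]
      refine integral_congr_ae (Filter.Eventually.of_forall fun z₁ => ?_)
      show Complex.I * (τ : ℂ) * Complex.exp (Complex.I * ((s z₁ : ℝ) : ℂ) * (τ : ℂ)) * w τ
          * F z₁ = _
      ring
    rw [hstep]
    ring
  have stepD : ∀ z₁ : ℂ, (∫ τ : ℝ, H (τ, z₁))
      = (2 * (π : ℂ)) * (deriv ψ (s z₁) * F z₁) := by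
    intro z₁
    have h1 : (∫ τ : ℝ, H (τ, z₁))
        = (∫ τ : ℝ, Complex.I * (τ : ℂ) * Complex.exp (Complex.I * ((s z₁ : ℝ) : ℂ) * (τ : ℂ))
            * (∫ t : ℝ, ψ t * Complex.exp (-Complex.I * t * τ))) * F z₁ := by
      rw [← integral_mul_const]
    rw [h1, key hψ' hψs (s z₁)]
    ring
  have hRHS : (∫ z₁ : ℂ, deriv ψ (s z₁) * F z₁)
      = ∫ z₁ : ℂ, deriv ψ (2 * (e * z₁).re) * μ z₁ / (z - z₁) := by
    refine integral_congr_ae (Filter.Eventually.of_forall fun z₁ => ?_)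
    simp only [hsdef, hFdef]
    rw [mul_div_assoc]
  have hl : (∫ τ : ℝ,
      ((Complex.I * (↑τ * e) / (π : ℂ)) *
          ∫ z₁ : ℂ, Complex.exp (2 * Complex.I * ((((↑τ * e) * z₁).re : ℝ) : ℂ)) * μ z₁ / (z - z₁))
        * w τ)
      = ∫ τ : ℝ, (e / (π : ℂ)) * ∫ z₁ : ℂ, H (τ, z₁) :=
    integral_congr_ae (Filter.Eventually.of_forall stepA)
  rw [hl, integral_const_mul]
  have hswap : (∫ τ : ℝ, ∫ z₁ : ℂ, H (τ, z₁)) = ∫ z₁ : ℂ, ∫ τ : ℝ, H (τ, z₁) :=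
    integral_integral_swap hHint
  rw [hswap]
  have hD : (∫ z₁ : ℂ, ∫ τ : ℝ, H (τ, z₁))
      = ∫ z₁ : ℂ, (2 * (π : ℂ)) * (deriv ψ (s z₁) * F z₁) :=
    integral_congr_ae (Filter.Eventually.of_forall stepD)
  rw [hD, integral_const_mul, ← hRHS]
  field_simp
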